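/- Let X be a real Banach space with property β. Then NRA(X) ∩ K(X) is dense in K(X) with respect to the operator norm. -/

import Mathlib

/-!
Under property β the numerical radius is computed on the faces `F_j = {p : ‖p‖ = 1, x_j*(p) = 1}`:
`v(S) = sup_j sup_{p ∈ F_j} |x_j*(S p)|`. Indeed every `(z, f) ∈ Π(X)` is seen, up to `η`, by some
`x_j*` with `|x_j*(z)| ≥ 1 - η`, and since `ρ < 1` such a `z` lies within `O(η)` of the face `F_j`.

Given `T`, pick a face `F_i` on which `|x_i* ∘ T|` nearly reaches `v(T)`. By Ekeland's principle and
a Hahn–Banach sandwich (the Bishop–Phelps argument), a functional `d` of small norm makes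
`τ x_i* ∘ T - d` attain its supremum on `F_i` at some `u₀`. The rank-one perturbation
`S = T + τ (λ x_i* - d) ⊗ x_i` raises the values on `F_i` by `λ` but those on any other face by at
most `(λ + ‖d‖) ρ`, so `v(S)` is attained at `(u₀, x_i*)`, while `S` stays compact and
`‖S - T‖ ≤ λ + ‖d‖`.
-/
universe u

noncomputable def numRadius {X : Type*} [NormedAddCommGroup X] [NormedSpace ℝ X]
    (T : X →L[ℝ] X) : ℝ :=
  sSup {r : ℝ | ∃ (x : X) (f : X →L[ℝ] ℝ), ‖x‖ = 1 ∧ ‖f‖ = 1 ∧ f x = 1 ∧ r = |f (T x)|}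

def AttainsNumRadius {X : Type*} [NormedAddCommGroup X] [NormedSpace ℝ X]
    (T : X →L[ℝ] X) : Prop :=
  ∃ (x : X) (f : X →L[ℝ] ℝ), ‖x‖ = 1 ∧ ‖f‖ = 1 ∧ f x = 1 ∧ |f (T x)| = numRadius T

def PropertyBeta (X : Type u) [NormedAddCommGroup X] [NormedSpace ℝ X] : Prop :=
  ∃ (ι : Type u) (x : ι → X) (xstar : ι → StrongDual ℝ X) (ρ : ℝ),
    0 ≤ ρ ∧ ρ < 1 ∧
    (∀ i, ‖x i‖ = 1) ∧ (∀ i, ‖xstar i‖ = 1) ∧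
    (∀ i, xstar i (x i) = 1) ∧
    (∀ i j, i ≠ j → |xstar i (x j)| ≤ ρ) ∧
    (⇑StrongDual.toWeakDual '' Metric.closedBall (0 : StrongDual ℝ X) 1 =
      closure (convexHull ℝ
        (Set.range (fun i => StrongDual.toWeakDual (xstar i)) ∪
          -(Set.range (fun i => StrongDual.toWeakDual (xstar i))))))

open Set Metric Filter Topology

lemma exists_abs_eq_one_mul_eq_abs (r : ℝ) : ∃ τ : ℝ, |τ| = 1 ∧ τ * r = |r| := by
  rcases le_total 0 r with hr | hr
  · exact ⟨1, abs_one, by rw [one_mul, abs_of_nonneg hr]⟩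
  · exact ⟨-1, by simp, by rw [abs_of_nonpos hr, neg_one_mul]⟩

section Ekeland

variable {E : Type*} [PseudoMetricSpace E] (φ : E → ℝ) (θ : ℝ) (F : Set E)

def ekelandSet (w : E) : Set E := {w' ∈ F | φ w + θ * dist w' w ≤ φ w'}

variable {φ θ F}

lemma self_mem_ekelandSet {w : E} (hw : w ∈ F) : w ∈ ekelandSet φ θ F w :=
  ⟨hw, by simp⟩

lemma ekelandSet_subset (hθ : 0 ≤ θ) {w w' : E} (h : w' ∈ ekelandSet φ θ F w) :
    ekelandSet φ θ F w' ⊆ ekelandSet φ θ F w := by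
  rintro w'' ⟨hw'', hle⟩
  refine ⟨hw'', ?_⟩
  have := mul_le_mul_of_nonneg_left (dist_triangle w'' w' w) hθ
  linarith [h.2]

lemma isClosed_ekelandSet (hφ : Continuous φ) (hF : IsClosed F) (w : E) :
    IsClosed (ekelandSet φ θ F w) :=
  hF.inter (isClosed_le (by fun_prop) hφ)

lemma exists_mem_ekelandSet_forall_le_add (hbdd : BddAbove (φ '' F)) {w : E} (hw : w ∈ F)
    {η : ℝ} (hη : 0 < η) :
    ∃ w' ∈ ekelandSet φ θ F w, ∀ w'' ∈ ekelandSet φ θ F w, φ w'' ≤ φ w' + η := by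
  have hne : (φ '' ekelandSet φ θ F w).Nonempty := ⟨φ w, w, self_mem_ekelandSet hw, rfl⟩
  have hbdd' : BddAbove (φ '' ekelandSet φ θ F w) := hbdd.mono (image_mono fun _ h => h.1)
  obtain ⟨_, ⟨w', hw', rfl⟩, hlt⟩ := exists_lt_of_lt_csSup hne (sub_lt_self _ hη)
  refine ⟨w', hw', fun w'' hw'' => ?_⟩
  linarith [le_csSup hbdd' (mem_image_of_mem φ hw'')]

/-- Ekeland's variational principle. -/
theorem exists_forall_le_add_mul_dist [CompleteSpace E] (hφ : Continuous φ) (hF : IsClosed F)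
    (hne : F.Nonempty) (hbdd : BddAbove (φ '' F)) (hθ : 0 < θ) :
    ∃ u₀ ∈ F, ∀ u ∈ F, φ u ≤ φ u₀ + θ * dist u u₀ := by
  set S := ekelandSet φ θ F
  choose! next hnext hnext_le using fun (n : ℕ) (w : E) (hw : w ∈ F) =>
    exists_mem_ekelandSet_forall_le_add (θ := θ) hbdd hw (pow_pos (one_half_pos (α := ℝ)) n)
  obtain ⟨w₀, hw₀⟩ := hne
  let u : ℕ → E := fun n => Nat.rec w₀ next n
  have hu_succ : ∀ n, u (n + 1) = next n (u n) := fun _ => rfl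
  have huF : ∀ n, u n ∈ F := fun n => by
    induction n with
    | zero => exact hw₀
    | succ n ih => exact (hnext n _ ih).1
  have hu_chain : ∀ n m, n ≤ m → u m ∈ S (u n) := fun n m hnm => by
    induction m, hnm using Nat.le_induction with
    | base => exact self_mem_ekelandSet (huF n)
    | succ m _ ih => exact ekelandSet_subset hθ.le ih (hu_succ m ▸ hnext m _ (huF m))
  have hu_near : ∀ n, ∀ w ∈ S (u (n + 1)), θ * dist w (u (n + 1)) ≤ (1 / 2 : ℝ) ^ n ∧
      φ w ≤ φ (u (n + 1)) + (1 / 2) ^ n := fun n w hw => by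
    have hle := hu_succ n ▸ hnext_le n (u n) (huF n) w
      (ekelandSet_subset hθ.le (hu_chain n (n + 1) n.le_succ) hw)
    exact ⟨by linarith [hw.2], hle⟩
  have hcauchy : CauchySeq u := by
    refine Metric.cauchySeq_iff'.2 fun ε hε => ?_
    obtain ⟨N, hN⟩ := exists_pow_lt_of_lt_one (mul_pos hθ hε) one_half_lt_one
    refine ⟨N + 1, fun n hn => lt_of_mul_lt_mul_left ?_ hθ.le⟩
    linarith [(hu_near N (u n) (hu_chain _ _ hn)).1]
  obtain ⟨u₀, hu₀⟩ := cauchySeq_tendsto_of_complete hcauchy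
  have hu₀S : ∀ n, u₀ ∈ S (u n) := fun n =>
    (isClosed_ekelandSet hφ hF (u n)).mem_of_tendsto hu₀
      (eventually_atTop.2 ⟨n, fun m hm => hu_chain n m hm⟩)
  refine ⟨u₀, (hu₀S 0).1, fun w hw => ?_⟩
  by_contra! hlt
  have hwS : ∀ n, w ∈ S (u (n + 1)) := fun n =>
    ekelandSet_subset hθ.le (hu₀S (n + 1)) ⟨hw, hlt.le⟩
  have hlim : Tendsto (fun n => φ (u (n + 1)) + (1 / 2 : ℝ) ^ n) atTop (𝓝 (φ u₀ + 0)) :=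
    ((hφ.tendsto u₀).comp (hu₀.comp (tendsto_add_atTop_nat 1))).add
      (tendsto_pow_atTop_nhds_zero_of_lt_one (by norm_num) one_half_lt_one)
  have hle : φ w ≤ φ u₀ := by
    simpa using ge_of_tendsto' hlim fun n => (hu_near n w (hwS n)).2
  linarith [mul_nonneg hθ.le (dist_nonneg (x := w) (y := u₀))]

end Ekeland

section Dual

variable {X : Type*} [NormedAddCommGroup X] [NormedSpace ℝ X]

theorem exists_norm_le_forall_le_of_le_mul_norm (G : StrongDual ℝ X) {K : Set X}
    (hK : Convex ℝ K) (h0 : (0 : X) ∈ K) {θ : ℝ} (hθ : 0 ≤ θ)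
    (hG : ∀ k ∈ K, G k ≤ θ * ‖k‖) :
    ∃ d : StrongDual ℝ X, ‖d‖ ≤ θ ∧ ∀ k ∈ K, G k ≤ d k := by
  -- separate the open cone `{(w, s) | θ ‖w‖ < s}` from the graph of `G` over `K`
  set U : Set (X × ℝ) := {p | p.1 ∈ univ ∧ (θ • norm) p.1 < p.2}
  have hUo : IsOpen U := by
    simpa [U] using isOpen_lt (by fun_prop) continuous_snd
  have hUc : Convex ℝ U := (convexOn_univ_norm.smul hθ).convex_strict_epigraph
  have hVc : Convex ℝ ((fun k => (k, G k)) '' K) :=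
    hK.is_linear_image ((LinearMap.id.prod G.toLinearMap).isLinear)
  have hdisj : Disjoint U ((fun k => (k, G k)) '' K) := by
    refine Set.disjoint_left.2 fun p hpU ⟨k, hk, hp⟩ => ?_
    subst hp
    exact (hG k hk).not_gt (by simpa using hpU.2)
  obtain ⟨φ, c, hφU, hφV⟩ := geometric_hahn_banach_open hUc hUo hVc hdisj
  have hφ : ∀ w s, φ (w, s) = φ (w, 0) + s * φ (0, 1) := fun w s => by
    rw [← smul_eq_mul, ← map_smul, ← map_add]
    simp
  have hU : ∀ w s, θ * ‖w‖ < s → φ (w, 0) + s * φ (0, 1) < c := fun w s hs =>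
    hφ w s ▸ hφU (w, s) ⟨trivial, hs⟩
  have hV : ∀ k ∈ K, c ≤ φ (k, 0) + G k * φ (0, 1) := fun k hk =>
    hφ k (G k) ▸ hφV _ ⟨k, hk, rfl⟩
  have hφ0 : φ (0, 0) = 0 := by rw [Prod.mk_zero_zero, map_zero]
  have hc_nonpos : c ≤ 0 := by simpa [hφ0] using hV 0 h0
  have hβ : φ (0, 1) < 0 := by simpa [hφ0] using (hU 0 1 (by simp)).trans_le hc_nonpos
  have hc_nonneg : 0 ≤ c := by
    by_contra! hc
    have := hU 0 (c / φ (0, 1)) (by simpa using div_pos_of_neg_of_neg hc hβ)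
    rw [hφ0, zero_add, div_mul_cancel₀ _ hβ.ne] at this
    exact this.false
  set d : StrongDual ℝ X := (-φ (0, 1))⁻¹ • φ.comp (ContinuousLinearMap.inl ℝ X ℝ)
  have hd : ∀ w, d w * -φ (0, 1) = φ (w, 0) := fun w => by
    simp [d]
    field_simp
    exact mul_div_cancel_left₀ _ hβ.ne
  have hd_le : ∀ w, d w ≤ θ * ‖w‖ := fun w =>
    le_of_forall_gt_imp_ge_of_dense fun s hs => by
      have := hU w s hs
      nlinarith [hd w]
  refine ⟨d, d.opNorm_le_bound hθ fun w => abs_le.2 ⟨?_, hd_le w⟩, fun k hk => ?_⟩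
  · have := hd_le (-w)
    rw [map_neg, norm_neg] at this
    linarith
  · have := hV k hk
    nlinarith [hd k]

/-- The Bishop–Phelps argument. -/
theorem exists_norm_le_isMaxOn_sub [CompleteSpace X] (G : StrongDual ℝ X) {F : Set X}
    (hF : IsClosed F) (hFc : Convex ℝ F) (hne : F.Nonempty) (hFb : Bornology.IsBounded F)
    {θ : ℝ} (hθ : 0 < θ) :
    ∃ d : StrongDual ℝ X, ‖d‖ ≤ θ ∧ ∃ u₀ ∈ F, IsMaxOn (fun u => G u - d u) F u₀ := by
  obtain ⟨u₀, hu₀, hle⟩ := exists_forall_le_add_mul_dist G.continuous hF hne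
    (G.lipschitz.isBounded_image hFb).bddAbove hθ
  obtain ⟨d, hd, hGd⟩ := exists_norm_le_forall_le_of_le_mul_norm G (hFc.translate (-u₀))
    ⟨u₀, hu₀, neg_add_cancel u₀⟩ hθ.le (by
      rintro _ ⟨u, hu, rfl⟩
      have := hle u hu
      show G (-u₀ + u) ≤ θ * ‖-u₀ + u‖
      rw [map_add, map_neg, neg_add_eq_sub, neg_add_eq_sub, ← dist_eq_norm]
      linarith)
  refine ⟨d, hd, u₀, hu₀, fun u hu => ?_⟩
  have := hGd _ ⟨u, hu, rfl⟩
  simp only [map_add, map_neg] at this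
  show G u - d u ≤ G u₀ - d u₀
  linarith

lemma isCompactOperator_smulRight (e : StrongDual ℝ X) (w : X) :
    IsCompactOperator (e.smulRight w) := by
  have : e.smulRight w = (ContinuousLinearMap.smulRight (1 : ℝ →L[ℝ] ℝ) w).comp e := by
    ext u
    simp
  rw [this, ContinuousLinearMap.coe_comp]
  exact (isCompactOperator_of_locallyCompactSpace_dom e).clm_comp _

lemma abs_apply_le_norm {g : StrongDual ℝ X} (hg : ‖g‖ ≤ 1) (u : X) : |g u| ≤ ‖u‖ :=
  (g.le_opNorm u).trans (mul_le_of_le_one_left (norm_nonneg u) hg)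

lemma abs_apply_apply_le {g : StrongDual ℝ X} (hg : ‖g‖ ≤ 1) (S : X →L[ℝ] X) (u : X) :
    |g (S u)| ≤ ‖S‖ * ‖u‖ :=
  (abs_apply_le_norm hg _).trans (S.le_opNorm u)

lemma abs_apply_apply_le_add {g : StrongDual ℝ X} (hg : ‖g‖ ≤ 1) (S : X →L[ℝ] X) (u v : X) :
    |g (S u)| ≤ |g (S v)| + ‖S‖ * ‖u - v‖ := by
  have := abs_apply_apply_le hg S (u - v)
  rw [map_sub, map_sub] at this
  linarith [abs_sub_abs_le_abs_sub (g (S u)) (g (S v))]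

end Dual

section NumRadius

variable {X : Type*} [NormedAddCommGroup X] [NormedSpace ℝ X]

lemma abs_apply_le_numRadius (T : X →L[ℝ] X) {u : X} {f : StrongDual ℝ X} (hu : ‖u‖ = 1)
    (hf : ‖f‖ = 1) (hfu : f u = 1) : |f (T u)| ≤ numRadius T := by
  refine le_csSup ⟨‖T‖, ?_⟩ ⟨u, f, hu, hf, hfu, rfl⟩
  rintro _ ⟨v, g, hv, hg, -, rfl⟩
  simpa [hv] using abs_apply_apply_le hg.le T v

def unitBallFace (f : StrongDual ℝ X) : Set X := {u | ‖u‖ ≤ 1 ∧ f u = 1}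

lemma isClosed_unitBallFace (f : StrongDual ℝ X) : IsClosed (unitBallFace f) :=
  (isClosed_le continuous_norm continuous_const).inter (isClosed_eq f.continuous continuous_const)

lemma convex_unitBallFace (f : StrongDual ℝ X) : Convex ℝ (unitBallFace f) := by
  convert (convex_closedBall (0 : X) 1).inter (convex_hyperplane f.isLinear 1) using 1
  ext u
  simp [unitBallFace]

lemma norm_eq_one_of_mem_unitBallFace {f : StrongDual ℝ X} (hf : ‖f‖ ≤ 1) {u : X}
    (hu : u ∈ unitBallFace f) : ‖u‖ = 1 := by
  refine hu.1.antisymm ?_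
  have := f.le_opNorm u
  rw [hu.2, norm_one] at this
  nlinarith [norm_nonneg u]

end NumRadius

section Beta

variable {X : Type*} [NormedAddCommGroup X] [NormedSpace ℝ X] {ι : Type*}

def weakStarAbsConvexHull (xs : ι → StrongDual ℝ X) : Set (WeakDual ℝ X) :=
  closure (convexHull ℝ (range (fun i => StrongDual.toWeakDual (xs i)) ∪
    -range (fun i => StrongDual.toWeakDual (xs i))))

lemma norm_le_of_forall_abs_apply_le {xs : ι → StrongDual ℝ X}
    (hball : ⇑StrongDual.toWeakDual '' closedBall (0 : StrongDual ℝ X) 1 ⊆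
      weakStarAbsConvexHull xs) {y : X} {c : ℝ} (h : ∀ j, |xs j y| ≤ c) : ‖y‖ ≤ c := by
  obtain ⟨g, hg, hgy⟩ := exists_dual_vector'' ℝ y
  have hD : weakStarAbsConvexHull xs ⊆ {φ : WeakDual ℝ X | φ y ≤ c} := by
    refine closure_minimal (convexHull_min ?_ (convex_halfSpace_le ⟨fun _ _ => rfl,
      fun _ _ => rfl⟩ c)) (isClosed_le (WeakDual.eval_continuous y) continuous_const)
    rintro φ (⟨j, rfl⟩ | ⟨j, hj⟩)
    · exact (le_abs_self _).trans (h j)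
    · obtain rfl : φ = -StrongDual.toWeakDual (xs j) := neg_eq_iff_eq_neg.1 hj.symm
      exact (neg_le_abs _).trans (h j)
  simpa [hgy] using hD (hball ⟨g, by simpa using hg, rfl⟩)

lemma exists_abs_apply_near {xs : ι → StrongDual ℝ X}
    (hball : ⇑StrongDual.toWeakDual '' closedBall (0 : StrongDual ℝ X) 1 ⊆
      weakStarAbsConvexHull xs) (hxs : ∀ j, ‖xs j‖ ≤ 1) (A : X →L[ℝ] X) {z : X}
    {f : StrongDual ℝ X} (hz : ‖z‖ = 1) (hf : ‖f‖ ≤ 1) (hfz : f z = 1) {η : ℝ} (hη : 0 < η) :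
    ∃ j, 1 - η ≤ |xs j z| ∧ |f (A z)| - η ≤ |xs j (A z)| := by
  obtain ⟨j₀, hj₀⟩ : ∃ j, 1 - η ≤ |xs j z| := by
    by_contra! H
    linarith [norm_le_of_forall_abs_apply_le hball fun j => (H j).le]
  by_contra! H
  have hpos : 0 < |f (A z)| - η := (abs_nonneg _).trans_lt (H j₀ hj₀)
  -- with `K = ‖A‖ / η`, the vector `K z ± A z` has `f`-value `K + |f (A z)|`,
  -- while every `xs j` is at most `K + |f (A z)| - η` on it
  obtain ⟨σ, hσ, hσf⟩ := exists_abs_eq_one_mul_eq_abs (f (A z))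
  set K := ‖A‖ / η
  have hK : K * (1 - η) + ‖A‖ = K := by
    rw [mul_one_sub, div_mul_cancel₀ _ hη.ne']
    ring
  have hKpos : 0 ≤ K := by positivity
  have hbound : ∀ j, |xs j (K • z + σ • A z)| ≤ K + (|f (A z)| - η) := fun j => by
    have hsplit : |xs j (K • z + σ • A z)| ≤ K * |xs j z| + |xs j (A z)| := by
      rw [map_add, map_smul, map_smul, smul_eq_mul, smul_eq_mul]
      calc _ ≤ |K * xs j z| + |σ * xs j (A z)| := abs_add_le _ _
        _ = _ := by rw [abs_mul, abs_mul, hσ, one_mul, abs_of_nonneg hKpos]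
    by_cases hj : 1 - η ≤ |xs j z|
    · have hjz : |xs j z| ≤ 1 := hz ▸ abs_apply_le_norm (hxs j) z
      linarith [H j hj, mul_le_of_le_one_right hKpos hjz]
    · have hAz : |xs j (A z)| ≤ ‖A‖ := by simpa [hz] using abs_apply_apply_le (hxs j) A z
      linarith [mul_le_mul_of_nonneg_left (not_le.1 hj).le hKpos]
  have hfy : f (K • z + σ • A z) = K + |f (A z)| := by simp [hfz, hσf]
  have := norm_le_of_forall_abs_apply_le hball hbound
  linarith [hfy ▸ (le_abs_self _).trans (abs_apply_le_norm hf (K • z + σ • A z))]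

end Beta

structure IsBetaFamily {X : Type*} [NormedAddCommGroup X] [NormedSpace ℝ X] {ι : Type*}
    (x : ι → X) (xs : ι → StrongDual ℝ X) (ρ : ℝ) : Prop where
  nonneg : 0 ≤ ρ
  lt_one : ρ < 1
  norm_x : ∀ i, ‖x i‖ = 1
  norm_xs : ∀ i, ‖xs i‖ = 1
  apply_self : ∀ i, xs i (x i) = 1
  abs_apply_le : ∀ i j, i ≠ j → |xs i (x j)| ≤ ρ
  image_closedBall : ⇑StrongDual.toWeakDual '' closedBall (0 : StrongDual ℝ X) 1 =
    weakStarAbsConvexHull xs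

namespace IsBetaFamily

variable {X : Type*} [NormedAddCommGroup X] [NormedSpace ℝ X] {ι : Type*}
  {x : ι → X} {xs : ι → StrongDual ℝ X} {ρ : ℝ}

lemma nonempty (hβ : IsBetaFamily x xs ρ) : Nonempty ι := by
  refine (isEmpty_or_nonempty ι).resolve_left fun hι => ?_
  have := hβ.image_closedBall ▸ mem_image_of_mem StrongDual.toWeakDual
    (mem_closedBall_self zero_le_one : (0 : StrongDual ℝ X) ∈ closedBall 0 1)
  simp only [weakStarAbsConvexHull, range_eq_empty, neg_empty, union_self, convexHull_empty,
    closure_empty, mem_empty_iff_false] at this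

lemma exists_mem_unitBallFace_norm_sub_le (hβ : IsBetaFamily x xs ρ) (i : ι) {u : X}
    (hu : ‖u‖ ≤ 1) {η : ℝ} (hiu : 1 - η ≤ xs i u) :
    ∃ p ∈ unitBallFace (xs i), ‖p - u‖ ≤ (1 + ρ) / (1 - ρ) * η := by
  have h1ρ : 0 < 1 - ρ := sub_pos.2 hβ.lt_one
  have hiu1 : xs i u ≤ 1 := (le_abs_self _).trans ((abs_apply_le_norm (hβ.norm_xs i).le u).trans hu)
  set t := (1 - xs i u) / (1 - ρ)
  have ht : 0 ≤ t := div_nonneg (by linarith) h1ρ.le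
  have htρ : 0 ≤ t * ρ := mul_nonneg ht hβ.nonneg
  -- moving `u` by `t` along `x i` raises `xs i` to `1 + t ρ`, and no other `xs j` exceeds that
  set q := u + t • x i
  have hqi : xs i q = 1 + t * ρ := by
    simp only [q, map_add, map_smul, smul_eq_mul, hβ.apply_self, t]
    field_simp
    ring
  have hq : ‖q‖ ≤ 1 + t * ρ := norm_le_of_forall_abs_apply_le hβ.image_closedBall.subset fun j => by
    rcases eq_or_ne j i with rfl | hji
    · rw [hqi, abs_of_nonneg (by positivity)]
    · calc |xs j q| ≤ |xs j u| + t * |xs j (x i)| := by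
            simpa [q, abs_mul, abs_of_nonneg ht] using abs_add_le (xs j u) (t * xs j (x i))
        _ ≤ 1 + t * ρ := add_le_add ((abs_apply_le_norm (hβ.norm_xs j).le u).trans hu)
            (mul_le_mul_of_nonneg_left (hβ.abs_apply_le j i hji) ht)
  have hc : 0 < 1 + t * ρ := by positivity
  refine ⟨(1 + t * ρ)⁻¹ • q, ⟨?_, ?_⟩, ?_⟩
  · rw [norm_smul, Real.norm_of_nonneg (inv_nonneg.2 hc.le)]
    exact inv_mul_le_one_of_le₀ hq hc.le
  · rw [map_smul, hqi, smul_eq_mul, inv_mul_cancel₀ hc.ne']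
  · have heq : (1 + t * ρ)⁻¹ • q - u = (1 + t * ρ)⁻¹ • (t • x i - (t * ρ) • u) := by
      simp only [q]
      match_scalars
      · field_simp
        ring
      · field_simp
    have hnorm : ‖t • x i - (t * ρ) • u‖ ≤ t + t * ρ := by
      refine (norm_sub_le _ _).trans (add_le_add ?_ ?_)
      · rw [norm_smul, hβ.norm_x, Real.norm_of_nonneg ht, mul_one]
      · rw [norm_smul, Real.norm_of_nonneg htρ]
        exact mul_le_of_le_one_right htρ hu
    calc ‖(1 + t * ρ)⁻¹ • q - u‖ ≤ 1 * (t + t * ρ) := by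
          rw [heq, norm_smul, Real.norm_of_nonneg (inv_nonneg.2 hc.le)]
          exact mul_le_mul (inv_le_one_of_one_le₀ (by linarith)) hnorm (norm_nonneg _) zero_le_one
      _ = (1 + ρ) / (1 - ρ) * (1 - xs i u) := by simp only [t]; field_simp
      _ ≤ (1 + ρ) / (1 - ρ) * η :=
          mul_le_mul_of_nonneg_left (by linarith) (div_nonneg (by linarith [hβ.nonneg]) h1ρ.le)

lemma numRadius_le (hβ : IsBetaFamily x xs ρ) (S : X →L[ℝ] X) {M : ℝ}
    (hM : ∀ j, ∀ p ∈ unitBallFace (xs j), |xs j (S p)| ≤ M) : numRadius S ≤ M := by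
  obtain ⟨i⟩ := hβ.nonempty
  refine csSup_le ⟨_, x i, xs i, hβ.norm_x i, hβ.norm_xs i, hβ.apply_self i, rfl⟩ ?_
  rintro _ ⟨z, f, hz, hf, hfz, rfl⟩
  refine le_of_forall_pos_le_add fun κ hκ => ?_
  set C := (1 + ρ) / (1 - ρ)
  have hC : 0 ≤ C := div_nonneg (by linarith [hβ.nonneg]) (by linarith [hβ.lt_one])
  set η := κ / (1 + ‖S‖ * C)
  have hη : 0 < η := div_pos hκ (by positivity)
  obtain ⟨j, hjz, hjS⟩ := exists_abs_apply_near hβ.image_closedBall.subset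
    (fun j => (hβ.norm_xs j).le) S hz hf.le hfz hη
  obtain ⟨σ, hσ, hσz⟩ := exists_abs_eq_one_mul_eq_abs (xs j z)
  obtain ⟨p, hp, hpz⟩ := hβ.exists_mem_unitBallFace_norm_sub_le j (u := σ • z)
    (by rw [norm_smul, Real.norm_eq_abs, hσ, hz, one_mul]) (by simpa [hσz] using hjz)
  have hSp := abs_apply_apply_le_add (hβ.norm_xs j).le S (σ • z) p
  rw [map_smul, map_smul, smul_eq_mul, abs_mul, hσ, one_mul, norm_sub_rev] at hSp
  calc |f (S z)| ≤ M + ‖S‖ * (C * η) + η := by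
        linarith [hM j p hp, mul_le_mul_of_nonneg_left hpz (norm_nonneg S)]
    _ = M + κ := by
        simp only [η]
        field_simp
        ring

lemma attainsNumRadius_of_forall_le (hβ : IsBetaFamily x xs ρ) (S : X →L[ℝ] X) {i : ι}
    {u₀ : X} (hu₀ : u₀ ∈ unitBallFace (xs i))
    (h : ∀ j, ∀ p ∈ unitBallFace (xs j), |xs j (S p)| ≤ |xs i (S u₀)|) :
    AttainsNumRadius S :=
  have hu₀1 := norm_eq_one_of_mem_unitBallFace (hβ.norm_xs i).le hu₀
  ⟨u₀, xs i, hu₀1, hβ.norm_xs i, hu₀.2,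
    (abs_apply_le_numRadius S hu₀1 (hβ.norm_xs i) hu₀.2).antisymm (hβ.numRadius_le S h)⟩

/-- The rank-one perturbation `u ↦ T u + τ (lam • xs i - d) u • x i` raises the values of
`τ xs i ∘ T - d` on the face of `xs i` by `lam`, but those on any other face by at most
`(lam + δ) ρ`. -/
lemma attainsNumRadius_add_smulRight (hβ : IsBetaFamily x xs ρ) (T : X →L[ℝ] X) {i : ι}
    {τ lam δ : ℝ} (hτ : |τ| = 1) {d : StrongDual ℝ X} (hd : ‖d‖ ≤ δ) {u₀ : X}
    (hu₀ : u₀ ∈ unitBallFace (xs i))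
    (hmax : ∀ p ∈ unitBallFace (xs i), τ * xs i (T p) - d p ≤ τ * xs i (T u₀) - d u₀)
    (hu₀T : numRadius T - 2 * δ ≤ τ * xs i (T u₀) - d u₀)
    (hδ : (lam + δ) * ρ + 2 * δ ≤ lam) :
    AttainsNumRadius (T + (τ • (lam • xs i - d)).smulRight (x i)) := by
  set S := T + (τ • (lam • xs i - d)).smulRight (x i)
  set M := τ * xs i (T u₀) - d u₀ + lam
  have hτ2 : τ * τ = 1 := by rw [← sq, ← sq_abs, hτ, one_pow]
  have hδ0 : 0 ≤ δ := (norm_nonneg d).trans hd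
  have hlam : 2 * δ ≤ lam := by nlinarith [hβ.nonneg, hβ.lt_one]
  have hd_le : ∀ {p : X}, ‖p‖ ≤ 1 → |d p| ≤ δ := fun hp =>
    (d.le_opNorm _).trans ((mul_le_of_le_one_right (norm_nonneg d) hp).trans hd)
  have hT_le : ∀ j, ∀ p ∈ unitBallFace (xs j), |xs j (T p)| ≤ numRadius T := fun j p hp =>
    abs_apply_le_numRadius T (norm_eq_one_of_mem_unitBallFace (hβ.norm_xs j).le hp)
      (hβ.norm_xs j) hp.2
  have hS : ∀ j u, xs j (S u) = xs j (T u) + τ * (lam * xs i u - d u) * xs j (x i) := by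
    simp [S]
  have hSi : ∀ p ∈ unitBallFace (xs i), τ * xs i (S p) = τ * xs i (T p) - d p + lam :=
    fun p hp => by
      rw [hS, hβ.apply_self, hp.2]
      linear_combination (lam - d p) * hτ2
  have hface_i : ∀ p ∈ unitBallFace (xs i), |xs i (S p)| ≤ M := fun p hp => by
    have hTp := abs_le.1 ((abs_mul τ _).trans_le ((hτ ▸ one_mul _).trans_le (hT_le i p hp)))
    rw [← one_mul |xs i (S p)|, ← hτ, ← abs_mul, abs_le, hSi p hp]
    constructor
    · linarith [(abs_le.1 (hd_le hp.1)).2]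
    · linarith [hmax p hp]
  have hface_j : ∀ j ≠ i, ∀ p ∈ unitBallFace (xs j), |xs j (S p)| ≤ M := fun j hji p hp => by
    have hcoef : |τ * (lam * xs i p - d p)| ≤ lam + δ := by
      rw [abs_mul, hτ, one_mul]
      refine (abs_sub _ _).trans (add_le_add ?_ (hd_le hp.1))
      rw [abs_mul, abs_of_nonneg (by linarith)]
      exact mul_le_of_le_one_right (by linarith) ((abs_apply_le_norm (hβ.norm_xs i).le p).trans hp.1)
    calc |xs j (S p)| ≤ |xs j (T p)| + |τ * (lam * xs i p - d p)| * |xs j (x i)| := by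
          rw [hS, ← abs_mul]
          exact abs_add_le _ _
      _ ≤ numRadius T + (lam + δ) * ρ :=
          add_le_add (hT_le j p hp) (mul_le_mul hcoef (hβ.abs_apply_le j i hji) (abs_nonneg _)
            (by linarith))
      _ ≤ M := by linarith
  have hM : |xs i (S u₀)| = M := by
    rw [← one_mul |xs i (S u₀)|, ← hτ, ← abs_mul, hSi u₀ hu₀]
    exact abs_of_nonneg ((abs_nonneg _).trans (hface_i u₀ hu₀))
  refine hβ.attainsNumRadius_of_forall_le S hu₀ fun j p hp => hM ▸ ?_
  rcases eq_or_ne j i with rfl | hji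
  exacts [hface_i p hp, hface_j j hji p hp]

theorem exists_smulRight_attainsNumRadius [CompleteSpace X] (hβ : IsBetaFamily x xs ρ)
    (T : X →L[ℝ] X) {ε : ℝ} (hε : 0 < ε) :
    ∃ (e : StrongDual ℝ X) (w : X), ‖e.smulRight w‖ < ε ∧ AttainsNumRadius (T + e.smulRight w) := by
  have h1ρ : 0 < 1 - ρ := sub_pos.2 hβ.lt_one
  set lam := ε / 3
  set δ := lam * (1 - ρ) / 3
  have hδ : 0 < δ := by positivity
  have hlam : 3 * lam = ε := by simp only [lam]; ring
  have hδlam : 3 * δ = lam - lam * ρ := by simp only [δ]; ring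
  have hlamρ : 0 ≤ lam * ρ := mul_nonneg (by positivity) hβ.nonneg
  obtain ⟨i, p₁, hp₁, hTp₁⟩ : ∃ i, ∃ p ∈ unitBallFace (xs i), numRadius T - δ < |xs i (T p)| := by
    by_contra! H
    linarith [hβ.numRadius_le T H]
  obtain ⟨τ, hτ, hτp₁⟩ := exists_abs_eq_one_mul_eq_abs (xs i (T p₁))
  obtain ⟨d, hd, u₀, hu₀, hmax⟩ := exists_norm_le_isMaxOn_sub (τ • (xs i).comp T)
    (isClosed_unitBallFace (xs i)) (convex_unitBallFace (xs i))
    ⟨x i, (hβ.norm_x i).le, hβ.apply_self i⟩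
    (isBounded_closedBall.subset fun u hu => mem_closedBall_zero_iff.2 hu.1) hδ
  have hmax' : ∀ p ∈ unitBallFace (xs i), τ * xs i (T p) - d p ≤ τ * xs i (T u₀) - d u₀ :=
    fun p hp => hmax hp
  refine ⟨τ • (lam • xs i - d), x i, ?_, hβ.attainsNumRadius_add_smulRight T hτ hd hu₀ hmax' ?_ ?_⟩
  · rw [ContinuousLinearMap.norm_smulRight_apply, hβ.norm_x, mul_one, norm_smul,
      Real.norm_eq_abs, hτ, one_mul]
    calc ‖lam • xs i - d‖ ≤ lam + δ := by
          refine (norm_sub_le _ _).trans (add_le_add ?_ hd)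
          rw [norm_smul, hβ.norm_xs, mul_one, Real.norm_of_nonneg (by positivity)]
      _ < ε := by linarith
  · have hdp₁ : |d p₁| ≤ δ :=
      (d.le_opNorm p₁).trans ((mul_le_of_le_one_right (norm_nonneg d) hp₁.1).trans hd)
    linarith [hmax' p₁ hp₁, le_abs_self (d p₁)]
  · linarith [mul_le_mul_of_nonneg_left hβ.lt_one.le hδ.le]

end IsBetaFamily

/-- If `X` has property β, then the numerical radius attaining compact operators are
dense in the compact operators on `X`. -/
theorem NRA_compact_dense_of_propertyBeta
    {X : Type u} [NormedAddCommGroup X] [NormedSpace ℝ X] [CompleteSpace X]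
    (h : PropertyBeta X) :
    ∀ T : X →L[ℝ] X, IsCompactOperator T →
      T ∈ closure {S : X →L[ℝ] X | AttainsNumRadius S ∧ IsCompactOperator S} := by
  obtain ⟨ι, x, xs, ρ, hρ0, hρ1, hx, hxs, hxx, hsep, hball⟩ := h
  have hβ : IsBetaFamily x xs ρ := ⟨hρ0, hρ1, hx, hxs, hxx, hsep, hball⟩
  intro T hT
  refine Metric.mem_closure_iff.2 fun ε hε => ?_
  obtain ⟨e, w, hsmall, hattains⟩ := hβ.exists_smulRight_attainsNumRadius T hε
  refine ⟨T + e.smulRight w, ⟨hattains, hT.add (isCompactOperator_smulRight e w)⟩, ?_⟩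
  rwa [dist_eq_norm, sub_add_cancel_left, norm_neg]
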